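/- Let t > 0, let μ be a probability measure on ℝ, and let z ∈ ℂ with Im z > 2√t. Then there exists a unique w ∈ ℂ with Im w > Im(z)/2 satisfying the functional equation (w − z)/t = G_μ(w); moreover this w satisfies |w − z| ≤ √t. -/

import Mathlib

/-!
Write `F w = z + t G_μ(w)`, so that the equation says `F w = w`. Since `|w - x| ≥ Im w` for real
`x`, the Cauchy transform satisfies `|G_μ(w)| ≤ 1 / Im w` and
`|G_μ(w₁) - G_μ(w₂)| ≤ |w₁ - w₂| / (Im w₁ Im w₂)`. Hence `|F w - z| ≤ t / Im w`, and `F` is a strict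
contraction between any two points above the line `Im w = √t`. On the closed ball of radius `√t`
about `z` the imaginary part stays above `Im z - √t > √t`, so `F` maps this ball into itself with
Lipschitz constant `t / (Im z - √t)² < 1` and Banach's theorem gives a fixed point. Any fixed point
above `√t` (in particular above `Im z / 2`) is within `t / Im w ≤ √t` of `z` and unique.
-/

open MeasureTheory

/-- The Cauchy transform of a measure `μ` on `ℝ`: `G_μ(z) = ∫ (z - x)⁻¹ dμ(x)`. -/
noncomputable def cauchyTransform (μ : Measure ℝ) (z : ℂ) : ℂ :=
  ∫ x, (z - (x : ℂ))⁻¹ ∂μ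

open Metric Set Function

section CauchyTransform

variable {μ : Measure ℝ} {w w₁ w₂ : ℂ}

lemma im_le_norm_sub_ofReal (w : ℂ) (x : ℝ) : w.im ≤ ‖w - x‖ := by
  simpa using Complex.im_le_norm (w - x)

lemma sub_ofReal_ne_zero (hw : 0 < w.im) (x : ℝ) : w - x ≠ 0 := fun h => by
  simpa [h] using (im_le_norm_sub_ofReal w x).trans_lt' hw

lemma norm_inv_sub_ofReal_le (hw : 0 < w.im) (x : ℝ) : ‖(w - x)⁻¹‖ ≤ w.im⁻¹ := by
  rw [norm_inv]
  exact inv_anti₀ hw (im_le_norm_sub_ofReal w x)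

lemma norm_inv_sub_ofReal_sub_inv_sub_ofReal_le (h₁ : 0 < w₁.im) (h₂ : 0 < w₂.im) (x : ℝ) :
    ‖(w₁ - x)⁻¹ - (w₂ - x)⁻¹‖ ≤ ‖w₁ - w₂‖ / (w₁.im * w₂.im) := by
  rw [inv_sub_inv (sub_ofReal_ne_zero h₁ x) (sub_ofReal_ne_zero h₂ x), sub_sub_sub_cancel_right,
    norm_div, norm_mul, norm_sub_rev]
  exact div_le_div_of_nonneg_left (norm_nonneg _) (mul_pos h₁ h₂)
    (mul_le_mul (im_le_norm_sub_ofReal w₁ x) (im_le_norm_sub_ofReal w₂ x) h₂.le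
      ((im_le_norm_sub_ofReal w₁ x).trans' h₁.le))

lemma integrable_inv_sub_ofReal [IsFiniteMeasure μ] (hw : 0 < w.im) :
    Integrable (fun x : ℝ => (w - x)⁻¹) μ :=
  (integrable_const w.im⁻¹).mono'
    ((continuous_const.sub Complex.continuous_ofReal).inv₀
      (sub_ofReal_ne_zero hw)).aestronglyMeasurable
    (.of_forall (norm_inv_sub_ofReal_le hw))

lemma norm_cauchyTransform_le [IsFiniteMeasure μ] (hw : 0 < w.im) :
    ‖cauchyTransform μ w‖ ≤ w.im⁻¹ * μ.real univ :=
  norm_integral_le_of_norm_le_const (.of_forall (norm_inv_sub_ofReal_le hw))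

lemma norm_cauchyTransform_sub_le [IsFiniteMeasure μ] (h₁ : 0 < w₁.im) (h₂ : 0 < w₂.im) :
    ‖cauchyTransform μ w₁ - cauchyTransform μ w₂‖ ≤
      ‖w₁ - w₂‖ / (w₁.im * w₂.im) * μ.real univ := by
  rw [cauchyTransform, cauchyTransform,
    ← integral_sub (integrable_inv_sub_ofReal h₁) (integrable_inv_sub_ofReal h₂)]
  exact norm_integral_le_of_norm_le_const
    (.of_forall (norm_inv_sub_ofReal_sub_inv_sub_ofReal_le h₁ h₂))

end CauchyTransform

lemma im_sub_le_im_of_mem_closedBall {z w : ℂ} {r : ℝ} (hw : w ∈ closedBall z r) :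
    z.im - r ≤ w.im := by
  have := (Complex.im_le_norm (z - w)).trans (mem_closedBall_iff_norm'.mp hw)
  rw [Complex.sub_im] at this
  linarith

noncomputable def subordinationMap (μ : Measure ℝ) (t : ℝ) (z w : ℂ) : ℂ :=
  z + t * cauchyTransform μ w

section SubordinationMap

variable {μ : Measure ℝ} {t : ℝ} {z w w₁ w₂ : ℂ}

lemma sub_div_eq_cauchyTransform_iff_isFixedPt (ht : t ≠ 0) :
    (w - z) / t = cauchyTransform μ w ↔ IsFixedPt (subordinationMap μ t z) w := by
  rw [div_eq_iff (by exact_mod_cast ht), IsFixedPt, subordinationMap]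
  constructor <;> intro h <;> linear_combination -h

variable [IsProbabilityMeasure μ]

lemma norm_subordinationMap_sub_le_sqrt (ht : 0 ≤ t) (hw : Real.sqrt t < w.im) :
    ‖subordinationMap μ t z w - z‖ ≤ Real.sqrt t := by
  have hw₀ : 0 < w.im := (Real.sqrt_nonneg t).trans_lt hw
  have hG := norm_cauchyTransform_le (μ := μ) hw₀
  rw [probReal_univ, mul_one] at hG
  rw [subordinationMap, add_sub_cancel_left, norm_mul, Complex.norm_real, Real.norm_of_nonneg ht]
  calc t * ‖cauchyTransform μ w‖ ≤ t * w.im⁻¹ := mul_le_mul_of_nonneg_left hG ht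
    _ = Real.sqrt t * (Real.sqrt t / w.im) := by
      rw [← mul_div_assoc, Real.mul_self_sqrt ht, div_eq_mul_inv]
    _ ≤ Real.sqrt t * 1 := by gcongr; exact div_le_one_of_le₀ hw.le hw₀.le
    _ = Real.sqrt t := mul_one _

lemma norm_subordinationMap_sub_subordinationMap_le (ht : 0 ≤ t) (h₁ : 0 < w₁.im)
    (h₂ : 0 < w₂.im) :
    ‖subordinationMap μ t z w₁ - subordinationMap μ t z w₂‖ ≤
      t / (w₁.im * w₂.im) * ‖w₁ - w₂‖ := by
  have hG := norm_cauchyTransform_sub_le (μ := μ) h₁ h₂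
  rw [probReal_univ, mul_one] at hG
  rw [subordinationMap, subordinationMap, add_sub_add_left_eq_sub, ← mul_sub, norm_mul,
    Complex.norm_real, Real.norm_of_nonneg ht]
  calc t * ‖cauchyTransform μ w₁ - cauchyTransform μ w₂‖
      ≤ t * (‖w₁ - w₂‖ / (w₁.im * w₂.im)) := mul_le_mul_of_nonneg_left hG ht
    _ = t / (w₁.im * w₂.im) * ‖w₁ - w₂‖ := by ring

lemma isFixedPt_subordinationMap_unique (ht : 0 ≤ t)
    (hfix₁ : IsFixedPt (subordinationMap μ t z) w₁) (hfix₂ : IsFixedPt (subordinationMap μ t z) w₂)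
    (h₁ : Real.sqrt t < w₁.im) (h₂ : Real.sqrt t < w₂.im) : w₁ = w₂ := by
  have hs := Real.sqrt_nonneg t
  have him : 0 < w₁.im * w₂.im := mul_pos (hs.trans_lt h₁) (hs.trans_lt h₂)
  have hlt : t / (w₁.im * w₂.im) < 1 := by
    rw [div_lt_one him, ← Real.mul_self_sqrt ht]
    exact mul_lt_mul'' h₁ h₂ hs hs
  have hle := norm_subordinationMap_sub_subordinationMap_le (μ := μ) (z := z) ht
    (hs.trans_lt h₁) (hs.trans_lt h₂)
  rw [hfix₁, hfix₂] at hle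
  rw [← sub_eq_zero, ← norm_le_zero_iff]
  nlinarith [norm_nonneg (w₁ - w₂)]

lemma exists_isFixedPt_subordinationMap_mem_closedBall (ht : 0 ≤ t)
    (hz : 2 * Real.sqrt t < z.im) :
    ∃ w ∈ closedBall z (Real.sqrt t), IsFixedPt (subordinationMap μ t z) w := by
  set c := z.im - Real.sqrt t
  have hs := Real.sqrt_nonneg t
  have hsc : Real.sqrt t < c := by linarith
  have hc : 0 < c := hs.trans_lt hsc
  have him (w) (hw : w ∈ closedBall z (Real.sqrt t)) : c ≤ w.im :=
    im_sub_le_im_of_mem_closedBall hw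
  have hmaps : MapsTo (subordinationMap μ t z) (closedBall z (Real.sqrt t))
      (closedBall z (Real.sqrt t)) := fun w hw =>
    mem_closedBall_iff_norm.mpr (norm_subordinationMap_sub_le_sqrt ht (hsc.trans_le (him w hw)))
  have hlip : LipschitzOnWith (t / c ^ 2).toNNReal (subordinationMap μ t z)
      (closedBall z (Real.sqrt t)) := .of_dist_le' fun w₁ h₁ w₂ h₂ => by
    rw [dist_eq_norm, dist_eq_norm]
    refine (norm_subordinationMap_sub_subordinationMap_le ht (hc.trans_le (him w₁ h₁))
      (hc.trans_le (him w₂ h₂))).trans ?_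
    gcongr
    rw [sq]
    exact mul_le_mul (him w₁ h₁) (him w₂ h₂) hc.le ((hc.trans_le (him w₁ h₁)).le)
  have hK : (t / c ^ 2).toNNReal < 1 := by
    rw [Real.toNNReal_lt_one, div_lt_one (by positivity), ← Real.mul_self_sqrt ht, sq]
    exact mul_lt_mul'' hsc hsc hs hs
  obtain ⟨w, hw, hfix, -⟩ := ContractingWith.exists_fixedPoint' isClosed_closedBall.isComplete
    hmaps ⟨hK, hlip.mapsToRestrict hmaps⟩ (mem_closedBall_self hs) (edist_ne_top _ _)
  exact ⟨w, hw, hfix⟩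

end SubordinationMap

/-- For `t > 0`, a probability measure `μ` and `Im z > 2√t`, there is a unique `w` with
`Im w > Im z / 2` satisfying `(w − z)/t = G_μ(w)`; moreover this `w` satisfies `|w − z| ≤ √t`. -/
theorem existsUnique_subordination_fixedPoint (t : ℝ) (ht : 0 < t)
    (μ : Measure ℝ) [IsProbabilityMeasure μ] (z : ℂ) (hz : 2 * Real.sqrt t < z.im) :
    (∃! w : ℂ, z.im / 2 < w.im ∧ (w - z) / t = cauchyTransform μ w) ∧
    (∀ w : ℂ, z.im / 2 < w.im → (w - z) / t = cauchyTransform μ w →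
      ‖w - z‖ ≤ Real.sqrt t) := by
  have hsqrt : Real.sqrt t < z.im / 2 := by linarith
  have hfix (w : ℂ) := sub_div_eq_cauchyTransform_iff_isFixedPt (μ := μ) (z := z) (w := w) ht.ne'
  obtain ⟨w₀, hw₀, hfix₀⟩ := exists_isFixedPt_subordinationMap_mem_closedBall (μ := μ) ht.le hz
  have him₀ : z.im / 2 < w₀.im := by
    have := im_sub_le_im_of_mem_closedBall hw₀
    linarith
  refine ⟨⟨w₀, ⟨him₀, (hfix w₀).2 hfix₀⟩, fun w ⟨hw, h⟩ => ?_⟩, fun w hw h => ?_⟩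
  · exact isFixedPt_subordinationMap_unique ht.le ((hfix w).1 h) hfix₀
      (hsqrt.trans hw) (hsqrt.trans him₀)
  · rw [← (hfix w).1 h]
    exact norm_subordinationMap_sub_le_sqrt ht.le (hsqrt.trans hw)
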